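/- Let (X_t) be standard Brownian motion in ℝ^d (d ≥ 2) started at the origin. Then almost surely ∫₀^δ |X_s|^{-2} ds = ∞ for every δ > 0. -/

import Mathlib

/-!
Since `E |X_s|² ≤ K s`, we have `E ∫₀^c |X_s|² ds ≤ K c²`, so by Fatou's lemma the normalised
energies `c⁻² ∫₀^c |X_s|² ds` have almost surely a finite `liminf` along any sequence `c → 0`. On
the other hand Cauchy–Schwarz gives `c² ≤ (∫₀^c |X_s|⁻² ds) (∫₀^c |X_s|² ds)`, so on a path where
`∫₀^δ |X_s|⁻² ds < ∞` the tails `∫₀^c |X_s|⁻² ds → 0` force the normalised energies to `∞`.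
-/

open MeasureTheory Metric ProbabilityTheory
open scoped ENNReal

/-- The Gaussian heat kernel `p_t(x,y) = (4πt)^{-d/2} exp(-|x-y|²/(4t))` on `ℝ^d`. -/
noncomputable def heatKernel (d : ℕ) (t : ℝ) (x y : EuclideanSpace ℝ (Fin d)) : ℝ :=
  (4 * Real.pi * t) ^ (-(d : ℝ) / 2) * Real.exp (-(dist x y) ^ 2 / (4 * t))

/-- `X` is a standard Brownian motion in `ℝ^d` under `P`, started at `x₀`. -/
structure IsBrownianMotion {Ω : Type*} [MeasurableSpace Ω] (P : Measure Ω) (d : ℕ)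
    (X : ℝ → Ω → EuclideanSpace ℝ (Fin d)) (x₀ : EuclideanSpace ℝ (Fin d)) : Prop where
  isProb : IsProbabilityMeasure P
  meas : Measurable fun p : ℝ × Ω => X p.1 p.2
  start : ∀ᵐ ω ∂P, X 0 ω = x₀
  cont : ∀ᵐ ω ∂P, Continuous fun t => X t ω
  incr : ∀ s t : ℝ, 0 ≤ s → s < t →
    ∀ A : Set (EuclideanSpace ℝ (Fin d)), MeasurableSet A →
      (P {ω | X t ω - X s ω ∈ A}).toReal = ∫ y in A, heatKernel d (t - s) 0 y
  indep : ∀ (n : ℕ) (u : ℕ → ℝ), Monotone u → 0 ≤ u 0 →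
    iIndepFun
      (fun i : Fin n => fun ω => X (u (i + 1)) ω - X (u (i : ℕ)) ω) P

open Filter Set Topology
open scoped NNReal

theorem ae_liminf_lt_top_of_lintegral_le {α : Type*} [MeasurableSpace α] {μ : Measure α}
    {f : ℕ → α → ℝ≥0∞} (hf : ∀ n, Measurable (f n)) {C : ℝ≥0∞} (hC : C ≠ ∞)
    (h : ∀ n, ∫⁻ a, f n a ∂μ ≤ C) :
    ∀ᵐ a ∂μ, liminf (fun n => f n a) atTop < ∞ :=
  ae_lt_top (.liminf hf) <| ((lintegral_liminf_le hf).trans <|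
    liminf_le_of_frequently_le' (Frequently.of_forall h)).trans_lt hC.lt_top |>.ne

theorem measure_univ_sq_le_lintegral_inv_sq_mul_lintegral_sq {α : Type*} [MeasurableSpace α]
    {μ : Measure α} {g : α → ℝ≥0} (hg : Measurable g)
    (hfin : ∫⁻ a, ((g a : ℝ≥0∞) ^ 2)⁻¹ ∂μ ≠ ∞) :
    μ univ ^ 2 ≤ (∫⁻ a, ((g a : ℝ≥0∞) ^ 2)⁻¹ ∂μ) * ∫⁻ a, (g a : ℝ≥0∞) ^ 2 ∂μ := by
  have hg_ne_zero : ∀ᵐ a ∂μ, g a ≠ 0 := by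
    filter_upwards [ae_lt_top (hg.coe_nnreal_ennreal.pow_const 2).inv hfin] with a ha h0
    simp [h0] at ha
  have hone : ∫⁻ a, (g a : ℝ≥0∞)⁻¹ * g a ∂μ = μ univ := by
    rw [← lintegral_one]
    refine lintegral_congr_ae ?_
    filter_upwards [hg_ne_zero] with a ha
    exact ENNReal.inv_mul_cancel (by simpa using ha) ENNReal.coe_ne_top
  have hcs := ENNReal.lintegral_mul_le_Lp_mul_Lq μ Real.HolderConjugate.two_two
    hg.coe_nnreal_ennreal.inv.aemeasurable hg.coe_nnreal_ennreal.aemeasurable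
  simp only [Pi.mul_apply, Pi.inv_apply, hone, ENNReal.rpow_two, ← ENNReal.inv_pow] at hcs
  calc μ univ ^ 2 ≤ ((∫⁻ a, ((g a : ℝ≥0∞) ^ 2)⁻¹ ∂μ) ^ (1 / 2 : ℝ) *
        (∫⁻ a, (g a : ℝ≥0∞) ^ 2 ∂μ) ^ (1 / 2 : ℝ)) ^ 2 := by gcongr
    _ = _ := by
      rw [mul_pow, ← ENNReal.rpow_natCast, ← ENNReal.rpow_natCast, ← ENNReal.rpow_mul,
        ← ENNReal.rpow_mul]
      norm_num

theorem tendsto_setLIntegral_Ioc_zero {ι : Type*} {l : Filter ι} {f : ℝ → ℝ≥0∞} {δ : ℝ}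
    (hδ : 0 < δ) (hf : ∫⁻ s in Ioc 0 δ, f s ≠ ∞) {c : ι → ℝ} (hc : Tendsto c l (𝓝 0)) :
    Tendsto (fun i => ∫⁻ s in Ioc 0 (c i), f s) l (𝓝 0) := by
  have hvol : Tendsto (volume.restrict (Ioc 0 δ) ∘ fun i => Ioc 0 (c i)) l (𝓝 0) := by
    refine tendsto_of_tendsto_of_tendsto_of_le_of_le tendsto_const_nhds ?_ (fun _ => zero_le)
      fun i => Measure.restrict_le_self _
    simpa [Function.comp_def, Real.volume_Ioc] using ENNReal.tendsto_ofReal hc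
  refine (tendsto_setLIntegral_zero hf hvol).congr' ?_
  filter_upwards [hc.eventually (Iic_mem_nhds hδ)] with i hi
  rw [Measure.restrict_restrict measurableSet_Ioc, inter_eq_left.2 (Ioc_subset_Ioc_right hi)]

theorem tendsto_setLIntegral_sq_div_sq_of_setLIntegral_inv_sq_ne_top {ι : Type*} {l : Filter ι}
    {g : ℝ → ℝ≥0} (hg : Measurable g) {δ : ℝ} (hδ : 0 < δ)
    (hfin : ∫⁻ s in Ioc 0 δ, ((g s : ℝ≥0∞) ^ 2)⁻¹ ≠ ∞) {c : ι → ℝ} (hc : Tendsto c l (𝓝[>] 0)) :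
    Tendsto (fun i => (∫⁻ s in Ioc 0 (c i), (g s : ℝ≥0∞) ^ 2) / ENNReal.ofReal (c i) ^ 2) l
      (𝓝 ∞) := by
  set T := fun i => ∫⁻ s in Ioc 0 (c i), ((g s : ℝ≥0∞) ^ 2)⁻¹
  have hT : Tendsto T l (𝓝 0) :=
    tendsto_setLIntegral_Ioc_zero hδ hfin (tendsto_nhds_of_tendsto_nhdsWithin hc)
  refine tendsto_nhds_top_mono (f := fun i => (T i)⁻¹) (by simpa using hT.inv) ?_
  filter_upwards [hc.eventually self_mem_nhdsWithin,
    (tendsto_nhds_of_tendsto_nhdsWithin hc).eventually (Iic_mem_nhds hδ)] with i hpos hle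
  have hTi : T i ≠ ∞ :=
    ne_top_of_le_ne_top hfin (lintegral_mono_set (Ioc_subset_Ioc_right hle))
  have hcs := measure_univ_sq_le_lintegral_inv_sq_mul_lintegral_sq hg hTi
  rw [Measure.restrict_apply_univ, Real.volume_Ioc, sub_zero] at hcs
  rw [ENNReal.le_div_iff_mul_le (Or.inl (by simpa using hpos)) (Or.inl (by simp)), mul_comm]
  exact ENNReal.div_le_of_le_mul' hcs

section HeatKernel

variable {d : ℕ} {t : ℝ}

theorem heatKernel_zero_left (y : EuclideanSpace ℝ (Fin d)) :
    heatKernel d t 0 y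
      = (4 * Real.pi * t) ^ (-(d : ℝ) / 2) * Real.exp (-(4 * t)⁻¹ * ‖y‖ ^ 2) := by
  rw [heatKernel, dist_zero_left]
  congr 2
  ring

theorem heatKernel_nonneg (ht : 0 ≤ t) (x y : EuclideanSpace ℝ (Fin d)) :
    0 ≤ heatKernel d t x y := by
  unfold heatKernel
  positivity

theorem continuous_heatKernel (x : EuclideanSpace ℝ (Fin d)) :
    Continuous (heatKernel d t x) := by
  unfold heatKernel
  fun_prop

theorem integral_heatKernel (ht : 0 < t) : ∫ y, heatKernel d t 0 y = 1 := by
  simp_rw [heatKernel_zero_left]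
  rw [integral_const_mul, GaussianFourier.integral_rexp_neg_mul_sq_norm (by positivity),
    finrank_euclideanSpace_fin, div_inv_eq_mul, show Real.pi * (4 * t) = 4 * Real.pi * t by ring,
    ← Real.rpow_add (by positivity), neg_div, neg_add_cancel, Real.rpow_zero]

theorem integrable_heatKernel (ht : 0 < t) : Integrable (heatKernel d t 0) :=
  .of_integral_ne_zero (by rw [integral_heatKernel ht]; exact one_ne_zero)

theorem sq_norm_mul_heatKernel_le (ht : 0 < t) (y : EuclideanSpace ℝ (Fin d)) :
    ‖y‖ ^ 2 * heatKernel d t 0 y ≤ 8 * 2 ^ ((d : ℝ) / 2) * t * heatKernel d (2 * t) 0 y := by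
  -- `x e^{-x/4t} ≤ 8t e^{-x/8t}` because `u e^{-u} ≤ 1`; the factor `2^{d/2}` turns the
  -- normalisation of `p_t` into that of `p_{2t}`.
  set u := ‖y‖ ^ 2 / (8 * t)
  have hnorm : ‖y‖ ^ 2 = 8 * t * u := (mul_div_cancel₀ _ (by positivity)).symm
  have hu : u * Real.exp (-u) ≤ 1 := by
    rw [Real.exp_neg, ← div_eq_mul_inv, div_le_one (Real.exp_pos u)]
    linarith [Real.add_one_le_exp u]
  have hconst : 2 ^ ((d : ℝ) / 2) * (4 * Real.pi * (2 * t)) ^ (-(d : ℝ) / 2)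
      = (4 * Real.pi * t) ^ (-(d : ℝ) / 2) := by
    rw [show 4 * Real.pi * (2 * t) = 2 * (4 * Real.pi * t) by ring,
      Real.mul_rpow (by norm_num) (by positivity), ← mul_assoc, ← Real.rpow_add (by norm_num),
      neg_div, add_neg_cancel, Real.rpow_zero, one_mul]
  have hexp : -(4 * t)⁻¹ * ‖y‖ ^ 2 = -u + -u := by
    rw [hnorm]
    field_simp
    ring
  have hexp2 : -(4 * (2 * t))⁻¹ * ‖y‖ ^ 2 = -u := by
    rw [hnorm]
    field_simp
    ring
  rw [heatKernel_zero_left, heatKernel_zero_left, hexp, hexp2, Real.exp_add, ← hconst, hnorm]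
  calc 8 * t * u * (2 ^ ((d : ℝ) / 2) * (4 * Real.pi * (2 * t)) ^ (-(d : ℝ) / 2) *
        (Real.exp (-u) * Real.exp (-u)))
      = 2 ^ ((d : ℝ) / 2) * (4 * Real.pi * (2 * t)) ^ (-(d : ℝ) / 2) * (8 * t) *
          (u * Real.exp (-u)) * Real.exp (-u) := by ring
    _ ≤ 2 ^ ((d : ℝ) / 2) * (4 * Real.pi * (2 * t)) ^ (-(d : ℝ) / 2) * (8 * t) * 1 *
          Real.exp (-u) := by gcongr
    _ = _ := by ring

theorem lintegral_heatKernel_mul_sq_nnnorm_le (ht : 0 < t) :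
    ∫⁻ y, ENNReal.ofReal (heatKernel d t 0 y) * (‖y‖₊ : ℝ≥0∞) ^ 2
      ≤ ENNReal.ofReal (8 * 2 ^ ((d : ℝ) / 2) * t) := by
  have h2t : 0 < 2 * t := by positivity
  calc ∫⁻ y, ENNReal.ofReal (heatKernel d t 0 y) * (‖y‖₊ : ℝ≥0∞) ^ 2
      = ∫⁻ y, ENNReal.ofReal (‖y‖ ^ 2 * heatKernel d t 0 y) := by
        refine lintegral_congr fun y => ?_
        rw [ENNReal.ofReal_mul (by positivity), ENNReal.ofReal_pow (norm_nonneg _), ofReal_norm,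
          enorm_eq_nnnorm, mul_comm]
    _ ≤ ∫⁻ y, ENNReal.ofReal (8 * 2 ^ ((d : ℝ) / 2) * t * heatKernel d (2 * t) 0 y) :=
        lintegral_mono fun y => ENNReal.ofReal_le_ofReal (sq_norm_mul_heatKernel_le ht y)
    _ = ENNReal.ofReal (8 * 2 ^ ((d : ℝ) / 2) * t) := by
        rw [← ofReal_integral_eq_lintegral_ofReal ((integrable_heatKernel h2t).const_mul _)
          (ae_of_all _ fun y => mul_nonneg (by positivity) (heatKernel_nonneg h2t.le 0 y)),
          integral_const_mul, integral_heatKernel h2t, mul_one]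

end HeatKernel

namespace IsBrownianMotion

variable {d : ℕ} {Ω : Type*} [MeasurableSpace Ω] {P : Measure Ω}
  {X : ℝ → Ω → EuclideanSpace ℝ (Fin d)} {x₀ : EuclideanSpace ℝ (Fin d)}

theorem measurable_apply (hX : IsBrownianMotion P d X x₀) (t : ℝ) : Measurable (X t) :=
  hX.meas.comp measurable_prodMk_left

theorem map_sub_eq_withDensity (hX : IsBrownianMotion P d X x₀) {s t : ℝ} (hs : 0 ≤ s)
    (hst : s < t) :
    P.map (fun ω => X t ω - X s ω)
      = volume.withDensity fun y => ENNReal.ofReal (heatKernel d (t - s) 0 y) := by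
  have := hX.isProb
  have hts : 0 < t - s := sub_pos.2 hst
  ext A hA
  rw [Measure.map_apply (f := fun ω => X t ω - X s ω)
      ((hX.measurable_apply t).sub (hX.measurable_apply s)) hA,
    withDensity_apply _ hA, ← ofReal_integral_eq_lintegral_ofReal
      (integrable_heatKernel hts).integrableOn (ae_of_all _ (heatKernel_nonneg hts.le 0)),
    ← hX.incr s t hs hst A hA, ENNReal.ofReal_toReal (measure_ne_top _ _)]
  rfl

theorem map_eq_withDensity (hX : IsBrownianMotion P d X 0) {t : ℝ} (ht : 0 < t) :
    P.map (X t) = volume.withDensity fun y => ENNReal.ofReal (heatKernel d t 0 y) := by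
  have hstart : (fun ω => X t ω - X 0 ω) =ᵐ[P] X t := by
    filter_upwards [hX.start] with ω h0
    rw [h0, sub_zero]
  rw [← Measure.map_congr hstart, hX.map_sub_eq_withDensity le_rfl ht, sub_zero]

theorem lintegral_sq_nnnorm_le (hX : IsBrownianMotion P d X 0) {t : ℝ} (ht : 0 < t) :
    ∫⁻ ω, (‖X t ω‖₊ : ℝ≥0∞) ^ 2 ∂P ≤ ENNReal.ofReal (8 * 2 ^ ((d : ℝ) / 2) * t) := by
  have hsq : Measurable fun y : EuclideanSpace ℝ (Fin d) => (‖y‖₊ : ℝ≥0∞) ^ 2 :=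
    measurable_nnnorm.coe_nnreal_ennreal.pow_const 2
  rw [← lintegral_map hsq (hX.measurable_apply t), hX.map_eq_withDensity ht,
    lintegral_withDensity_eq_lintegral_mul _
      (continuous_heatKernel 0).measurable.ennreal_ofReal hsq]
  exact lintegral_heatKernel_mul_sq_nnnorm_le ht

theorem measurable_setLIntegral_sq_nnnorm (hX : IsBrownianMotion P d X x₀) (I : Set ℝ) :
    Measurable fun ω => ∫⁻ s in I, (‖X s ω‖₊ : ℝ≥0∞) ^ 2 :=
  Measurable.lintegral_prod_right'
    ((hX.meas.nnnorm.coe_nnreal_ennreal.pow_const 2).comp measurable_swap)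

theorem lintegral_setLIntegral_sq_nnnorm_div_le (hX : IsBrownianMotion P d X 0) (c : ℝ) :
    ∫⁻ ω, (∫⁻ s in Ioc 0 c, (‖X s ω‖₊ : ℝ≥0∞) ^ 2) / ENNReal.ofReal c ^ 2 ∂P
      ≤ ENNReal.ofReal (8 * 2 ^ ((d : ℝ) / 2)) := by
  have := hX.isProb
  simp only [ENNReal.div_eq_inv_mul]
  rw [lintegral_const_mul _ (hX.measurable_setLIntegral_sq_nnnorm _), ← ENNReal.div_eq_inv_mul,
    lintegral_lintegral_swap (f := fun ω s => (‖X s ω‖₊ : ℝ≥0∞) ^ 2)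
      ((hX.meas.nnnorm.coe_nnreal_ennreal.pow_const 2).comp measurable_swap).aemeasurable]
  refine ENNReal.div_le_of_le_mul ?_
  calc ∫⁻ s in Ioc 0 c, ∫⁻ ω, (‖X s ω‖₊ : ℝ≥0∞) ^ 2 ∂P
      ≤ ∫⁻ _ in Ioc 0 c, ENNReal.ofReal (8 * 2 ^ ((d : ℝ) / 2) * c) :=
        setLIntegral_mono' measurableSet_Ioc fun s hs => (hX.lintegral_sq_nnnorm_le hs.1).trans
          (ENNReal.ofReal_le_ofReal (by gcongr; exact hs.2))
    _ = ENNReal.ofReal (8 * 2 ^ ((d : ℝ) / 2)) * ENNReal.ofReal c ^ 2 := by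
        rw [setLIntegral_const, Real.volume_Ioc, sub_zero, ENNReal.ofReal_mul (by positivity),
          sq, mul_assoc]

end IsBrownianMotion

theorem inverse_square_integral_diverges_general
    (d : ℕ) {Ω : Type*} [MeasurableSpace Ω] (P : Measure Ω)
    (X : ℝ → Ω → EuclideanSpace ℝ (Fin d))
    (hBM : IsBrownianMotion P d X 0) :
    ∀ᵐ ω ∂P, ∀ δ : ℝ, 0 < δ →
      ∫⁻ s in Set.Ioc (0 : ℝ) δ, ((‖X s ω‖₊ : ℝ≥0∞) ^ 2)⁻¹ = ⊤ := by
  set c : ℕ → ℝ := fun n => 1 / ((n : ℝ) + 1)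
  have hc : Tendsto c atTop (𝓝[>] 0) := tendsto_nhdsWithin_iff.2
    ⟨tendsto_one_div_add_atTop_nhds_zero_nat, .of_forall fun n => mem_Ioi.2 (by positivity)⟩
  have hbdd : ∀ᵐ ω ∂P, liminf (fun n =>
      (∫⁻ s in Ioc 0 (c n), (‖X s ω‖₊ : ℝ≥0∞) ^ 2) / ENNReal.ofReal (c n) ^ 2) atTop < ∞ :=
    ae_liminf_lt_top_of_lintegral_le
      (fun n => (hBM.measurable_setLIntegral_sq_nnnorm _).div_const _) ENNReal.ofReal_ne_top
      (fun n => hBM.lintegral_setLIntegral_sq_nnnorm_div_le (c n))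
  filter_upwards [hbdd] with ω hω δ hδ
  by_contra hfin
  have hpath : Measurable fun s => ‖X s ω‖₊ := (hBM.meas.comp measurable_prodMk_right).nnnorm
  exact hω.ne
    (tendsto_setLIntegral_sq_div_sq_of_setLIntegral_inv_sq_ne_top hpath hδ hfin hc).liminf_eq

/-- For standard Brownian motion in `ℝ^d`, `d ≥ 2`, started at the origin, almost surely
`∫₀^δ |X_s|⁻² ds = ∞` for every `δ > 0`. -/
theorem inverse_square_integral_diverges
    (d : ℕ) (hd : 2 ≤ d) {Ω : Type*} [MeasurableSpace Ω] (P : Measure Ω)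
    (X : ℝ → Ω → EuclideanSpace ℝ (Fin d))
    (hBM : IsBrownianMotion P d X 0) :
    ∀ᵐ ω ∂P, ∀ δ : ℝ, 0 < δ →
      ∫⁻ s in Set.Ioc (0 : ℝ) δ, ((‖X s ω‖₊ : ℝ≥0∞) ^ 2)⁻¹ = ⊤ :=
  inverse_square_integral_diverges_general d P X hBM
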